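/- arXiv:0810.5533 — 7 statements merged into one kernel-verified Lean document; each statement's English description precedes it below -/
import Mathlib

section
/- Let G = (∏_{i=1}^n A_i) × ℤˡ where each A_i is a free group, and let ψ : G → G be a group homomorphism with ψ ∘ ψ = ψ whose range is a nonabelian free group (i.e., the range of ψ is isomorphic to a free group and contains two elements that do not commute). Then there exists an index r, 1 ≤ r ≤ n, such that ψ = ψ ∘ pr_r and, for every g ∈ G, pr_r(g) = 1 implies ψ(g) = 1. -/
/-- The projection of `G = (∏ i, FreeGroup (X i)) × ℤˡ` onto its `r`-th free-group coordinate: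
it keeps the `r`-th free-group coordinate and is trivial in every other coordinate
(including the `ℤˡ` coordinate). -/
def pr {n l : ℕ} {X : Fin n → Type} (r : Fin n) :
    ((∀ i : Fin n, FreeGroup (X i)) × Multiplicative (Fin l → ℤ)) →*
      ((∀ i : Fin n, FreeGroup (X i)) × Multiplicative (Fin l → ℤ)) :=
  ((MonoidHom.mulSingle (fun i : Fin n => FreeGroup (X i)) r).comp
      ((Pi.evalMonoidHom (fun i : Fin n => FreeGroup (X i)) r).comp
        (MonoidHom.fst _ _))).prod 1

/-!
The subgroups `A_i` and `ℤˡ` of `G` commute pairwise and generate `G`, so their images under `ψ`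
commute pairwise and generate the nonabelian group `ψ(G)`; hence some `ψ(A_r)` is nonabelian. In a
free group the centralizer of a nonabelian subgroup is trivial: an element `u` centralizing
noncommuting `v, w` is central in the free group `⟨u, v, w⟩`, which has rank at least two and hence
trivial center. So `ψ` kills every other factor, and `ψ` factors through `pr_r`.
-/

namespace FreeGroup

variable {α : Type*}

theorem toWord_of_mul_of_toWord_eq_cons [DecidableEq α] {x : FreeGroup α} {a : α}
    {p : α × Bool} {w : List (α × Bool)} (hx : x.toWord = p :: w) (ha : a ≠ p.1) :
    (of a * x).toWord = (a, true) :: x.toWord := by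
  rw [toWord_mul, toWord_of, List.singleton_append]
  refine IsReduced.reduce_eq ?_
  rw [hx]
  exact isReduced_cons_cons.mpr ⟨fun h => absurd h ha, hx ▸ isReduced_toWord⟩

theorem not_commute_of_toWord_eq_cons [DecidableEq α] {x : FreeGroup α} {a : α}
    {p : α × Bool} {w : List (α × Bool)} (hx : x.toWord = p :: w) (ha : a ≠ p.1) :
    ¬ Commute (of a) x := by
  intro h
  -- The word of `x * of a` is a sublist of `x.toWord ++ [(a, true)]` of the same length as the
  -- word `(a, true) :: x.toWord` of `of a * x`, so the two words would have the same first letter.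
  have hsub := toWord_mul_sublist x (of a)
  rw [← h.eq, toWord_of_mul_of_toWord_eq_cons hx ha, toWord_of] at hsub
  have hrot := hsub.eq_of_length (by simp)
  rw [hx, List.cons_append, List.cons.injEq] at hrot
  exact ha (congrArg Prod.fst hrot.1)

theorem center_eq_bot [Nontrivial α] : Subgroup.center (FreeGroup α) = ⊥ := by
  classical
  refine (Subgroup.eq_bot_iff_forall _).mpr fun x hx => ?_
  by_contra hx1
  obtain ⟨p, w, hw⟩ := List.exists_cons_of_ne_nil (mt toWord_eq_nil_iff.mp hx1)
  obtain ⟨a, ha⟩ := exists_ne p.1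
  exact not_commute_of_toWord_eq_cons hw ha (Subgroup.mem_center_iff.mp hx (of a))

instance [Subsingleton α] : IsMulCommutative (FreeGroup α) := by
  cases isEmpty_or_nonempty α
  · infer_instance
  · have := uniqueOfSubsingleton (Classical.arbitrary α)
    infer_instance

end FreeGroup

namespace Subgroup

variable {H : Type*} [Group H]

theorem iSup_le_centralizer_iSup {ι : Type*} {K : ι → Subgroup H}
    (h : ∀ i j, K i ≤ centralizer (K j)) : ⨆ i, K i ≤ centralizer (⨆ i, K i : Subgroup H) :=
  iSup_le fun i => le_centralizer_iff.mpr (iSup_le fun j => h j i)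

theorem map_le_centralizer_map {G : Type*} [Group G] {K L : Subgroup H}
    (h : K ≤ centralizer L) (φ : H →* G) : K.map φ ≤ centralizer (L.map φ) :=
  (map_mono h).trans (by simpa using map_centralizer_le_centralizer_image _ φ)

end Subgroup

namespace IsFreeGroup

variable {G : Type*} [Group G] [IsFreeGroup G]

theorem center_eq_bot_of_not_commute {v w : G} (h : ¬ Commute v w) : Subgroup.center G = ⊥ := by
  let e := toFreeGroup G
  have : Nontrivial (Generators G) := by
    by_contra hG
    rw [not_nontrivial_iff_subsingleton] at hG
    exact h (e.injective (by rw [map_mul, map_mul]; exact mul_comm' _ _))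
  refine (Subgroup.eq_bot_iff_forall _).mpr fun x hx => e.injective ?_
  rw [map_one, ← Subgroup.mem_bot, ← FreeGroup.center_eq_bot]
  exact Subgroup.mem_center_iff.mpr fun g => by
    simpa using congrArg e (Subgroup.mem_center_iff.mp hx (e.symm g))

theorem centralizer_eq_bot {L : Subgroup G} (hL : ¬ L ≤ Subgroup.centralizer L) :
    Subgroup.centralizer (L : Set G) = ⊥ := by
  obtain ⟨v, hv, w, hw, hvw⟩ : ∃ v ∈ L, ∃ w ∈ L, ¬ Commute v w := by
    simpa [SetLike.le_def, Subgroup.mem_centralizer_iff, Commute, SemiconjBy, eq_comm] using hL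
  refine (Subgroup.eq_bot_iff_forall _).mpr fun u hu => ?_
  let K := Subgroup.closure ({u, v, w} : Set G)
  have hK : K ≤ Subgroup.centralizer {u} := by
    rw [Subgroup.closure_le]
    rintro g (rfl | rfl | rfl) <;>
      simp only [SetLike.mem_coe, Subgroup.mem_centralizer_singleton_iff]
    · exact Subgroup.mem_centralizer_iff.mp hu g hv
    · exact Subgroup.mem_centralizer_iff.mp hu g hw
  have hcenter := center_eq_bot_of_not_commute (G := K)
    (v := ⟨v, Subgroup.subset_closure (by simp)⟩) (w := ⟨w, Subgroup.subset_closure (by simp)⟩)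
    fun h => hvw (congrArg Subtype.val h.eq)
  have hu_center : (⟨u, Subgroup.subset_closure (by simp)⟩ : K) ∈ Subgroup.center K :=
    Subgroup.mem_center_iff.mpr fun k =>
      Subtype.ext (Subgroup.mem_centralizer_singleton_iff.mp (hK k.2))
  rw [hcenter, Subgroup.mem_bot] at hu_center
  exact congrArg Subtype.val hu_center

theorem exists_forall_ne_le_ker {H : Type*} [Group H] {ι : Type*} (φ : H →* G)
    {K : ι → Subgroup H} (hcomm : Pairwise fun i j => K i ≤ Subgroup.centralizer (K j))
    (htop : ⨆ i, K i = ⊤) {a b : H} (hab : ¬ Commute (φ a) (φ b)) :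
    ∃ r, ¬ K r ≤ Subgroup.centralizer (K r) ∧ ∀ j ≠ r, K j ≤ φ.ker := by
  obtain ⟨r, hr⟩ : ∃ r, ¬ (K r).map φ ≤ Subgroup.centralizer ((K r).map φ) := by
    by_contra! hall
    have hle := Subgroup.iSup_le_centralizer_iSup fun i j =>
      (eq_or_ne i j).elim (fun h => h ▸ hall i) fun h => Subgroup.map_le_centralizer_map (hcomm h) φ
    rw [← Subgroup.map_iSup, htop] at hle
    exact hab (Subgroup.mem_centralizer_iff.mp (hle (Subgroup.mem_map_of_mem φ trivial)) _
      (Subgroup.mem_map_of_mem φ trivial))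
  refine ⟨r, fun h => hr (Subgroup.map_le_centralizer_map h φ), fun j hj => ?_⟩
  rw [← Subgroup.map_eq_bot_iff, eq_bot_iff, ← centralizer_eq_bot hr]
  exact Subgroup.map_le_centralizer_map (hcomm hj) φ

end IsFreeGroup

section Factors

variable {n : ℕ} {X : Fin n → Type} {l : ℕ}

theorem pr_apply (r : Fin n) (g : (∀ i, FreeGroup (X i)) × Multiplicative (Fin l → ℤ)) :
    pr r g = (Pi.mulSingle r (g.1 r), 1) :=
  rfl

variable (X l) in
def factor : Option (Fin n) → Subgroup ((∀ i, FreeGroup (X i)) × Multiplicative (Fin l → ℤ))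
  | some i => (pr i).range
  | none => (MonoidHom.inr _ _).range

theorem factor_none_le_center :
    factor X l none ≤ Subgroup.center ((∀ i, FreeGroup (X i)) × Multiplicative (Fin l → ℤ)) := by
  rintro _ ⟨z, rfl⟩
  exact Subgroup.mem_center_iff.mpr fun g => Prod.ext (by simp) (mul_comm _ _)

theorem pairwise_factor_le_centralizer :
    Pairwise fun i j => factor X l i ≤ Subgroup.centralizer (factor X l j) := by
  have hcentral (j) : factor X l none ≤ Subgroup.centralizer (factor X l j) :=
    factor_none_le_center.trans (Subgroup.center_le_centralizer _)
  rintro (_ | i) (_ | j) hij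
  · exact absurd rfl hij
  · exact hcentral _
  · exact Subgroup.le_centralizer_iff.mp (hcentral _)
  · rintro _ ⟨g, rfl⟩
    refine Subgroup.mem_centralizer_iff.mpr ?_
    rintro _ ⟨h, rfl⟩
    exact Prod.ext (Pi.mulSingle_commute (fun h => hij (congrArg some h.symm)) _ _) rfl

theorem iSup_factor : ⨆ j, factor X l j = ⊤ := by
  refine eq_top_iff.mpr fun g _ => ?_
  rw [← Prod.fst_mul_snd g]
  refine Subgroup.mul_mem _ ?_ (Subgroup.mem_iSup_of_mem none ⟨g.2, rfl⟩)
  exact Subgroup.pi_mem_of_mulSingle_mem (H := (⨆ j, factor X l j).comap (MonoidHom.inl _ _)) _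
    fun i => Subgroup.mem_iSup_of_mem (some i) ⟨g, rfl⟩

theorem factor_le_ker_pr {r : Fin n} {j : Option (Fin n)} (hj : j ≠ some r) :
    factor X l j ≤ (pr r).ker := by
  rcases j with _ | i
  · rintro _ ⟨z, rfl⟩
    simp [pr_apply]
  · rintro _ ⟨g, rfl⟩
    simp [pr_apply, Pi.mulSingle_eq_of_ne (fun h => hj (congrArg some h.symm))]

theorem pr_eq_self_of_mem_factor {r : Fin n}
    {g : (∀ i, FreeGroup (X i)) × Multiplicative (Fin l → ℤ)} (hg : g ∈ factor X l (some r)) :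
    pr r g = g := by
  obtain ⟨h, rfl⟩ := hg
  simp [pr_apply]

theorem eq_comp_pr_of_factor_le_ker {H : Type*} [Group H]
    (ψ : (∀ i, FreeGroup (X i)) × Multiplicative (Fin l → ℤ) →* H) {r : Fin n}
    (hker : ∀ j ≠ some r, factor X l j ≤ ψ.ker) : ψ = ψ.comp (pr r) := by
  refine MonoidHom.eq_of_eqOn_dense (s := ⋃ j, (factor X l j : Set _))
    (by rw [← Subgroup.iSup_eq_closure, iSup_factor]) ?_
  rintro g ⟨_, ⟨j, rfl⟩, hg⟩
  by_cases hj : j = some r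
  · subst hj
    simp [pr_eq_self_of_mem_factor hg]
  · simp [MonoidHom.mem_ker.mp (hker j hj hg), MonoidHom.mem_ker.mp (factor_le_ker_pr hj hg)]

end Factors

theorem exists_coordinate_of_projection_onto_free_general
    (n l : ℕ) (X : Fin n → Type)
    (ψ : ((∀ i : Fin n, FreeGroup (X i)) × Multiplicative (Fin l → ℤ)) →*
      ((∀ i : Fin n, FreeGroup (X i)) × Multiplicative (Fin l → ℤ)))
    (hfree : ∃ β : Type, Nonempty (ψ.range ≃* FreeGroup β))
    (hnonab : ∃ a ∈ ψ.range, ∃ b ∈ ψ.range, a * b ≠ b * a) :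
    ∃ r : Fin n, ψ = ψ.comp (pr r) ∧ ∀ g, pr r g = 1 → ψ g = 1 := by
  obtain ⟨β, ⟨e⟩⟩ := hfree
  have := IsFreeGroup.ofMulEquiv e.symm
  obtain ⟨_, ⟨a, rfl⟩, _, ⟨b, rfl⟩, hab⟩ := hnonab
  obtain ⟨j, hj, hker⟩ := IsFreeGroup.exists_forall_ne_le_ker ψ.rangeRestrict
    pairwise_factor_le_centralizer iSup_factor (a := a) (b := b)
    fun h => hab (congrArg Subtype.val h.eq)
  rw [MonoidHom.ker_rangeRestrict] at hker
  rcases j with _ | r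
  · exact absurd (factor_none_le_center.trans (Subgroup.center_le_centralizer _)) hj
  have hψ := eq_comp_pr_of_factor_le_ker ψ hker
  exact ⟨r, hψ, fun g hg => by rw [hψ, MonoidHom.comp_apply, hg, map_one]⟩

/-- If `ψ` is an idempotent endomorphism of `G = (∏ i, FreeGroup (X i)) × ℤˡ` whose range is a
nonabelian free group, then there is an index `r` such that `ψ = ψ ∘ pr_r` and `pr_r g = 1`
implies `ψ g = 1`. -/
theorem exists_coordinate_of_projection_onto_free
    (n l : ℕ) (X : Fin n → Type)
    (ψ : ((∀ i : Fin n, FreeGroup (X i)) × Multiplicative (Fin l → ℤ)) →*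
      ((∀ i : Fin n, FreeGroup (X i)) × Multiplicative (Fin l → ℤ)))
    (hproj : ψ.comp ψ = ψ)
    (hfree : ∃ β : Type, Nonempty (ψ.range ≃* FreeGroup β))
    (hnonab : ∃ a ∈ ψ.range, ∃ b ∈ ψ.range, a * b ≠ b * a) :
    ∃ r : Fin n, ψ = ψ.comp (pr r) ∧ ∀ g, pr r g = 1 → ψ g = 1 :=
  exists_coordinate_of_projection_onto_free_general n l X ψ hfree hnonab
end

section
/- Let G = (∏_{i=1}^n A_i) × ℤˡ where each A_i is a finitely generated free group, and let ψ : G → G be a group homomorphism with ψ ∘ ψ = ψ whose range is a nonabelian free group freely generated by elements y₁, …, y_k. Let r be an index such that ψ = ψ ∘ pr_r and pr_r(g) = 1 implies ψ(g) = 1 for all g (such an r exists). Then there exist finitely many elements z₁, …, z_m (m ≥ 0) of the r-th factor subgroup A_r such that ψ(z_i) = 1 for each i, and the set {pr_r(y₁), …, pr_r(y_k), z₁, …, z_m} generates A_r. -/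
section

variable {ι G : Type*} [Group G]

lemma FreeGroupBasis.closure_range (b : FreeGroupBasis ι G) :
    Subgroup.closure (Set.range b) = ⊤ := by
  have hb : ⇑b = (b.repr.symm : FreeGroup ι →* G) ∘ FreeGroup.of := rfl
  rw [hb, Set.range_comp, ← MonoidHom.map_closure, FreeGroup.closure_range_of,
    Subgroup.map_top_of_surjective _ b.repr.symm.surjective]

lemma FreeGroupBasis.closure_range_coe {H : Subgroup G} (b : FreeGroupBasis ι H) :
    Subgroup.closure (Set.range fun i => (b i : G)) = H := by
  rw [show (fun i => (b i : G)) = H.subtype ∘ b from rfl, Set.range_comp,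
    ← MonoidHom.map_closure, b.closure_range, ← MonoidHom.range_eq_map, Subgroup.range_subtype]

lemma Subgroup.FG.exists_fin_closure_range_eq {H : Subgroup G} (hH : H.FG) :
    ∃ (m : ℕ) (a : Fin m → G), Subgroup.closure (Set.range a) = H := by
  obtain ⟨S, hS, hfin⟩ := (fg_iff H).1 hH
  obtain ⟨m, a, -, rfl⟩ := hfin.fin_param
  exact ⟨m, a, hS⟩

lemma MonoidHom.apply_eq_self_of_mem_range {ψ : G →* G} (hproj : ψ.comp ψ = ψ) {g : G}
    (hg : g ∈ ψ.range) : ψ g = g := by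
  obtain ⟨x, rfl⟩ := hg
  exact DFunLike.congr_fun hproj x

lemma MonoidHom.range_le_map_closure_range_comp {ψ p : G →* G} (hproj : ψ.comp ψ = ψ)
    (hp : ψ.comp p = ψ) {y : ι → G} (hy : Subgroup.closure (Set.range y) = ψ.range) :
    ψ.range ≤ (Subgroup.closure (Set.range (p ∘ y))).map ψ := by
  rw [MonoidHom.map_closure, ← hy]
  refine Subgroup.closure_mono ?_
  rintro _ ⟨i, rfl⟩
  have hyi : y i ∈ ψ.range := hy ▸ Subgroup.subset_closure ⟨i, rfl⟩
  exact ⟨p (y i), ⟨i, rfl⟩, (DFunLike.congr_fun hp (y i)).trans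
    (ψ.apply_eq_self_of_mem_range hproj hyi)⟩

lemma Subgroup.exists_sup_closure_eq_of_map_le {G' : Type*} [Group G'] (f : G →* G')
    {H A : Subgroup G} (hHA : H ≤ A) (hmap : A.map f ≤ H.map f) (a : ι → G)
    (ha : Subgroup.closure (Set.range a) = A) :
    ∃ z : ι → G,
      (∀ i, z i ∈ A) ∧ (∀ i, f (z i) = 1) ∧ H ⊔ Subgroup.closure (Set.range z) = A := by
  have haA : ∀ i, a i ∈ A := fun i => ha ▸ Subgroup.subset_closure ⟨i, rfl⟩
  choose w hwH hwf using fun i => hmap ⟨a i, haA i, rfl⟩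
  have hzA : ∀ i, a i * (w i)⁻¹ ∈ A := fun i => A.mul_mem (haA i) (A.inv_mem (hHA (hwH i)))
  refine ⟨fun i => a i * (w i)⁻¹, hzA, fun i => by simp [hwf], le_antisymm ?_ ?_⟩
  · exact sup_le hHA ((Subgroup.closure_le A).2 (by rintro _ ⟨i, rfl⟩; exact hzA i))
  · rw [← ha, Subgroup.closure_le]
    rintro _ ⟨i, rfl⟩
    have hz : a i * (w i)⁻¹ ∈ H ⊔ Subgroup.closure (Set.range fun i => a i * (w i)⁻¹) :=
      mem_sup_right (Subgroup.subset_closure ⟨i, rfl⟩)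
    simpa using mul_mem hz (mem_sup_left (hwH i))

end

theorem exists_generators_of_factor_of_projection_onto_free_general
    (n l : ℕ) (X : Fin n → Type) [∀ i, Finite (X i)]
    (ψ : ((∀ i : Fin n, FreeGroup (X i)) × Multiplicative (Fin l → ℤ)) →*
      ((∀ i : Fin n, FreeGroup (X i)) × Multiplicative (Fin l → ℤ)))
    (hproj : ψ.comp ψ = ψ)
    (k : ℕ) (y : Fin k → ((∀ i : Fin n, FreeGroup (X i)) × Multiplicative (Fin l → ℤ)))
    (b : FreeGroupBasis (Fin k) ψ.range) (hb : ∀ i : Fin k, ((b i : ψ.range) : _) = y i)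
    (r : Fin n) (hr₁ : ψ = ψ.comp (pr r)) :
    ∃ (m : ℕ) (z : Fin m → ((∀ i : Fin n, FreeGroup (X i)) × Multiplicative (Fin l → ℤ))),
      (∀ i : Fin m, z i ∈ (pr r).range) ∧
      (∀ i : Fin m, ψ (z i) = 1) ∧
      Subgroup.closure (Set.range (fun i : Fin k => pr r (y i)) ∪ Set.range z) =
        (pr (X := X) (l := l) r).range := by
  have hy : Subgroup.closure (Set.range y) = ψ.range := funext hb ▸ b.closure_range_coe
  have hH : Subgroup.closure (Set.range fun i => pr r (y i)) ≤ (pr r).range :=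
    (Subgroup.closure_le _).2 (by rintro _ ⟨i, rfl⟩; exact ⟨y i, rfl⟩)
  have hmap : (pr r).range.map ψ ≤ (Subgroup.closure (Set.range fun i => pr r (y i))).map ψ :=
    (Subgroup.map_le_range ψ _).trans (ψ.range_le_map_closure_range_comp hproj hr₁.symm hy)
  obtain ⟨m, a, ha⟩ :=
    ((Group.fg_iff_subgroup_fg _).1 inferInstance : (pr (X := X) (l := l) r).range.FG)
      |>.exists_fin_closure_range_eq
  obtain ⟨z, hzA, hzψ, hz⟩ := Subgroup.exists_sup_closure_eq_of_map_le ψ hH hmap a ha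
  exact ⟨m, z, hzA, hzψ, by rw [Subgroup.closure_union, hz]⟩

/-- Let `ψ` be an idempotent endomorphism of `G = (∏ i, FreeGroup (X i)) × ℤˡ` (with each
`X i` finite) whose range is a nonabelian free group freely generated by `y₁, …, y_k`, and let
`r` be an index with `ψ = ψ ∘ pr_r` and such that `pr_r g = 1` implies `ψ g = 1`. Then there
are finitely many elements `z₁, …, z_m` of the `r`-th factor subgroup `A_r = range (pr_r)` with
`ψ (z i) = 1` such that `{pr_r y₁, …, pr_r y_k, z₁, …, z_m}` generates `A_r`. -/
theorem exists_generators_of_factor_of_projection_onto_free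
    (n l : ℕ) (X : Fin n → Type) [∀ i, Finite (X i)]
    (ψ : ((∀ i : Fin n, FreeGroup (X i)) × Multiplicative (Fin l → ℤ)) →*
      ((∀ i : Fin n, FreeGroup (X i)) × Multiplicative (Fin l → ℤ)))
    (hproj : ψ.comp ψ = ψ)
    (k : ℕ) (y : Fin k → ((∀ i : Fin n, FreeGroup (X i)) × Multiplicative (Fin l → ℤ)))
    (b : FreeGroupBasis (Fin k) ψ.range) (hb : ∀ i : Fin k, ((b i : ψ.range) : _) = y i)
    (hnonab : ∃ a ∈ ψ.range, ∃ c ∈ ψ.range, a * c ≠ c * a)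
    (r : Fin n) (hr₁ : ψ = ψ.comp (pr r)) (hr₂ : ∀ g, pr r g = 1 → ψ g = 1) :
    ∃ (m : ℕ) (z : Fin m → ((∀ i : Fin n, FreeGroup (X i)) × Multiplicative (Fin l → ℤ))),
      (∀ i : Fin m, z i ∈ (pr r).range) ∧
      (∀ i : Fin m, ψ (z i) = 1) ∧
      Subgroup.closure (Set.range (fun i : Fin k => pr r (y i)) ∪ Set.range z) =
        (pr (X := X) (l := l) r).range :=
  exists_generators_of_factor_of_projection_onto_free_general n l X ψ hproj k y b hb r hr₁
end

section
/- Every surjective group homomorphism from a finitely generated free group to itself is an isomorphism. Concretely: for any n ∈ ℕ, every surjective group homomorphism φ : FreeGroup (Fin n) → FreeGroup (Fin n) is injective (hence bijective). -/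
/-!
Finitely generated residually finite groups are Hopfian (Mal'cev): if `φ : G →* G` is surjective
and `π : G →* Q` is a map onto a finite group, then precomposition with `φ` is an injective
self-map of the finite set `G →* Q`, hence surjective, so `π = ψ ∘ φ` kills `ker φ`.

Free groups are residually finite. Read a reduced word of length `m` as the path `0 — 1 — ⋯ — m`
whose `j`-th edge is labelled by the `j`-th letter. Since no letter is followed by its inverse,
the edges labelled by a fixed generator form a partial injection of `{0, …, m}`; extending these
to permutations gives an action in which the word moves `m` to `0`.
-/

open Function Equiv

instance MonoidHom.finite_of_fg {G M : Type*} [Group G] [Group.FG G] [Monoid M] [Finite M] :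
    Finite (G →* M) := by
  obtain ⟨S, hS⟩ := Group.fg_def.mp ‹_›
  exact .of_injective (fun f (s : S) => f s) fun f g h =>
    MonoidHom.eq_of_eqOn_dense hS fun x hx => congrFun h ⟨x, hx⟩

theorem Group.ResiduallyFinite.injective_of_surjective {G : Type*} [Group G] [Group.FG G]
    [Group.ResiduallyFinite G] {φ : G →* G} (hφ : Surjective φ) : Injective φ := by
  refine (injective_iff_map_eq_one φ).mpr fun g hg => by_contra fun hg1 => ?_
  obtain ⟨H, hgH⟩ := Group.exists_finiteIndexNormalSubgroup_notMem g hg1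
  have hcomp : Injective fun ψ : G →* G ⧸ H.toSubgroup => ψ.comp φ :=
    fun _ _ => (MonoidHom.cancel_right hφ).mp
  obtain ⟨ψ, hψ⟩ := Finite.injective_iff_surjective.mp hcomp (QuotientGroup.mk' H.toSubgroup)
  have : (g : G ⧸ H.toSubgroup) = 1 := by
    rw [← QuotientGroup.mk'_apply, ← hψ, MonoidHom.comp_apply, hg, map_one]
  exact hgH ((QuotientGroup.eq_one_iff g).mp this)

theorem List.prod_map_perm_apply_last {γ β : Type*} (L : List γ) (g : γ → Equiv.Perm β)
    (p : Fin (L.length + 1) → β) (h : ∀ j : Fin L.length, g L[j] (p j.succ) = p j.castSucc) :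
    (L.map g).prod (p (Fin.last _)) = p 0 := by
  induction L with
  | nil => rfl
  | cons x L ih =>
    rw [List.map_cons, List.prod_cons, Perm.mul_apply]
    have := ih (p ∘ Fin.succ) fun j => h j.succ
    exact (congrArg (g x) this).trans (h 0)

namespace FreeGroup

/-- A letter `(a, b)` at position `j` asks the permutation of `a` to send `edgeEnd b j` to
`edgeEnd (!b) j`, so that the letter itself moves `j + 1` to `j`. -/
def edgeEnd {m : ℕ} (b : Bool) (j : Fin m) : Fin (m + 1) := bif b then j.succ else j.castSucc

theorem injOn_edgeEnd {m : ℕ} {s : Set (Fin m)} {o : Fin m → Bool}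
    (ho : ∀ j ∈ s, ∀ j' ∈ s, (j : ℕ) + 1 = j' → o j = o j') :
    s.InjOn fun j => edgeEnd (o j) j := by
  intro j hj j' hj' h
  cases hb : o j <;> cases hb' : o j' <;> simp only [edgeEnd, hb, hb', cond_true, cond_false] at h
  · exact Fin.castSucc_injective _ h
  · simpa [hb, hb'] using ho j' hj' j hj (by simpa [Fin.ext_iff] using h.symm)
  · simpa [hb, hb'] using ho j hj j' hj' (by simpa [Fin.ext_iff] using h)
  · exact Fin.succ_injective _ h

variable {α : Type*}

theorem IsReduced.exists_perm_edgeEnd {L : List (α × Bool)} (hL : IsReduced L) (a : α) :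
    ∃ σ : Perm (Fin (L.length + 1)),
      ∀ j : Fin L.length, L[j].1 = a → σ (edgeEnd L[j].2 j) = edgeEnd (!L[j].2) j := by
  set s : Set (Fin L.length) := {j | L[j].1 = a}
  have adjacent : ∀ j ∈ s, ∀ j' ∈ s, (j : ℕ) + 1 = j' → L[j].2 = L[j'].2 := by
    rintro j hj ⟨_, hlt⟩ hj' rfl
    exact hL.getElem j hlt (hj.trans hj'.symm)
  have adjacent' : ∀ j ∈ s, ∀ j' ∈ s, (j : ℕ) + 1 = j' → (!L[j].2) = !L[j'].2 :=
    fun j hj j' hj' h => by rw [adjacent j hj j' hj' h]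
  obtain ⟨σ, hσ⟩ := Perm.exists_extending_pair _ _
    (injOn_edgeEnd adjacent).injective (injOn_edgeEnd adjacent').injective
  exact ⟨σ, fun j hj => hσ ⟨j, hj⟩⟩

theorem exists_monoidHom_perm_apply_ne_one (w : FreeGroup α) (hw : w ≠ 1) :
    ∃ (m : ℕ) (π : FreeGroup α →* Perm (Fin m)), π w ≠ 1 := by
  classical
  choose σ hσ using (isReduced_toWord (x := w)).exists_perm_edgeEnd
  refine ⟨w.toWord.length + 1, lift σ, fun h1 => hw ?_⟩
  have path := List.prod_map_perm_apply_last w.toWord (fun x => cond x.2 (σ x.1) (σ x.1)⁻¹) id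
    fun j => by
      have step := hσ _ j rfl
      cases hb : w.toWord[(j : ℕ)].2
      · simpa [Equiv.symm_apply_eq, edgeEnd, hb] using step.symm
      · simpa [edgeEnd, hb] using step
  rw [← lift_mk, mk_toWord, h1] at path
  simpa using path

instance instResiduallyFinite : Group.ResiduallyFinite (FreeGroup α) :=
  Group.residuallyFinite_of_forall_exists_finite_monoidHom fun w hw =>
    let ⟨_, π, hπ⟩ := exists_monoidHom_perm_apply_ne_one w hw
    ⟨_, _, inferInstance, π, hπ⟩

end FreeGroup

/-- Every surjective endomorphism of a finitely generated free group is an isomorphism. -/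
theorem freeGroup_surjective_endomorphism_bijective
    (n : ℕ) (φ : FreeGroup (Fin n) →* FreeGroup (Fin n))
    (hsurj : Function.Surjective φ) :
    Function.Bijective φ :=
  ⟨Group.ResiduallyFinite.injective_of_surjective hsurj, hsurj⟩
end

section
/- Let F be a group and N a normal subgroup of F contained in the commutator subgroup [F,F]. Write G = F/N and let π : F → G be the quotient map. Then π induces a group isomorphism from F₂/(F₃ · N) onto G₂/G₃, where F₂ = [F,F], F₃ = [F,[F,F]], G₂ = [G,G], G₃ = [G,[G,G]], and F₃ · N denotes the subgroup of F₂ generated by F₃ and N (which is normal in F₂, indeed in F). -/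
/-!
The quotient map `π : F → G` sends `F₂` onto `G₂` and `F₃` onto `G₃`, so `F₂ → G₂ ⧸ G₃` is
surjective, with kernel `F₂ ∩ π⁻¹(G₃) = F₂ ∩ F₃N`.
-/

theorem Subgroup.map_top_lowerCentralSeries_of_surjective {G H : Type*} [Group G] [Group H]
    {f : G →* H} (hf : Function.Surjective f) (n : ℕ) :
    ((⊤ : Subgroup G).lowerCentralSeries n).map f = (⊤ : Subgroup H).lowerCentralSeries n := by
  rw [map_lowerCentralSeries, map_top_of_surjective f hf]

namespace QuotientGroup

variable {G : Type*} [Group G] (N : Subgroup G) [N.Normal] {A B : Subgroup G}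
  {A' B' : Subgroup (G ⧸ N)} [B'.Normal]

def restrictMk (hA : A.map (mk' N) = A') : A →* A' :=
  ((mk' N).comp A.subtype).codRestrict A' fun a => hA ▸ Subgroup.mem_map_of_mem _ a.2

theorem restrictMk_surjective (hA : A.map (mk' N) = A') :
    Function.Surjective (restrictMk N hA) := by
  rintro ⟨y, hy⟩
  obtain ⟨a, ha, rfl⟩ := Subgroup.mem_map.mp (hA ▸ hy)
  exact ⟨⟨a, ha⟩, Subtype.ext rfl⟩

theorem ker_mk'_comp_restrictMk (hA : A.map (mk' N) = A') (hB : B.map (mk' N) = B') :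
    ((mk' (B'.subgroupOf A')).comp (restrictMk N hA)).ker = (B ⊔ N).subgroupOf A := by
  ext a
  rw [MonoidHom.mem_ker, MonoidHom.comp_apply, mk'_apply, eq_one_iff, Subgroup.mem_subgroupOf,
    Subgroup.mem_subgroupOf, ← hB]
  change mk' N a ∈ _ ↔ _
  rw [← Subgroup.mem_comap, Subgroup.comap_map_eq, ker_mk']

noncomputable def subgroupOfSupEquiv [B.Normal] (hA : A.map (mk' N) = A')
    (hB : B.map (mk' N) = B') :
    A ⧸ (B ⊔ N).subgroupOf A ≃* A' ⧸ B'.subgroupOf A' :=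
  (quotientMulEquivOfEq (ker_mk'_comp_restrictMk N hA hB).symm).trans
    (quotientKerEquivOfSurjective _ ((mk'_surjective _).comp (restrictMk_surjective N hA)))

end QuotientGroup

theorem quotient_commutator_iso_of_le_commutator_general
    {F : Type*} [Group F] (N : Subgroup F) [N.Normal] :
    ∃ e : ((⊤ : Subgroup F).lowerCentralSeries 1 ⧸
            ((⊤ : Subgroup F).lowerCentralSeries 2 ⊔ N).subgroupOf ((⊤ : Subgroup F).lowerCentralSeries 1)) ≃*
          ((⊤ : Subgroup (F ⧸ N)).lowerCentralSeries 1 ⧸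
            ((⊤ : Subgroup (F ⧸ N)).lowerCentralSeries 2).subgroupOf ((⊤ : Subgroup (F ⧸ N)).lowerCentralSeries 1)),
      ∀ (x : F) (hx : x ∈ (⊤ : Subgroup F).lowerCentralSeries 1)
        (hx' : (QuotientGroup.mk' N) x ∈ (⊤ : Subgroup (F ⧸ N)).lowerCentralSeries 1),
        e (QuotientGroup.mk ⟨x, hx⟩) = QuotientGroup.mk ⟨(QuotientGroup.mk' N) x, hx'⟩ :=
  have hπ := QuotientGroup.mk'_surjective N
  ⟨QuotientGroup.subgroupOfSupEquiv N
    (Subgroup.map_top_lowerCentralSeries_of_surjective hπ 1)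
    (Subgroup.map_top_lowerCentralSeries_of_surjective hπ 2), fun _ _ _ => rfl⟩

/-- Let `N` be a normal subgroup of a group `F` contained in the commutator subgroup
`F₂ = [F,F]`, and set `G = F/N` with quotient map `π`. Then `π` induces an isomorphism
`F₂/(F₃·N) ≃ G₂/G₃`, where `F₂, F₃` (resp. `G₂, G₃`) are the second and third terms of the
lower central series of `F` (resp. `G`). -/
theorem quotient_commutator_iso_of_le_commutator
    {F : Type*} [Group F] (N : Subgroup F) [N.Normal]
    (hN : N ≤ (⊤ : Subgroup F).lowerCentralSeries 1) :
    ∃ e : ((⊤ : Subgroup F).lowerCentralSeries 1 ⧸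
            ((⊤ : Subgroup F).lowerCentralSeries 2 ⊔ N).subgroupOf ((⊤ : Subgroup F).lowerCentralSeries 1)) ≃*
          ((⊤ : Subgroup (F ⧸ N)).lowerCentralSeries 1 ⧸
            ((⊤ : Subgroup (F ⧸ N)).lowerCentralSeries 2).subgroupOf ((⊤ : Subgroup (F ⧸ N)).lowerCentralSeries 1)),
      ∀ (x : F) (hx : x ∈ (⊤ : Subgroup F).lowerCentralSeries 1)
        (hx' : (QuotientGroup.mk' N) x ∈ (⊤ : Subgroup (F ⧸ N)).lowerCentralSeries 1),
        e (QuotientGroup.mk ⟨x, hx⟩) = QuotientGroup.mk ⟨(QuotientGroup.mk' N) x, hx'⟩ :=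
  quotient_commutator_iso_of_le_commutator_general N
end

section
/- Let G be a group generated by a set S (i.e., the subgroup closure of S is all of G). Then the commutator subgroup G₂ = [G,G] equals the join of G₃ = [G,[G,G]] with the subgroup generated by all commutators ⁅x,y⁆ with x, y ∈ S; equivalently, the quotient G₂/G₃ is generated by the images of the commutators ⁅x,y⁆ of pairs of generators. -/
open scoped commutatorElement

/-! Modulo `G₃ = ⁅[G,G], G⁆` every commutator is central, so the expansions
`⁅a * c, b⁆ = a ⁅c, b⁆ a⁻¹ · ⁅a, b⁆` and `⁅a⁻¹, b⁆ = a⁻¹ ⁅b, a⁆ a` show that the set of `a` with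
`⁅a, b⁆ ∈ G₃ ⊔ ⟨⁅x, y⁆ | x, y ∈ S⟩` is a subgroup. Inducting over the closure of `S` in each
argument in turn puts every commutator in that subgroup. -/

namespace Subgroup

variable {G : Type*} [Group G]

theorem conj_mem_of_commutator_top_le {H K : Subgroup G} (hHK : ⁅H, ⊤⁆ ≤ K) {h : G}
    (hH : h ∈ H) (hK : h ∈ K) (g : G) : g * h * g⁻¹ ∈ K := by
  have hconj : g * h * g⁻¹ = h * ⁅h⁻¹, g⁆ := by group
  rw [hconj]
  exact mul_mem hK (hHK (commutator_mem_commutator (inv_mem hH) (mem_top g)))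

theorem commutatorElement_mem_of_mem_closure_left {K : Subgroup G}
    (hK : ⁅_root_.commutator G, ⊤⁆ ≤ K) {S : Set G} {b : G} (hS : ∀ x ∈ S, ⁅x, b⁆ ∈ K)
    {a : G} (ha : a ∈ closure S) : ⁅a, b⁆ ∈ K := by
  have conj_mem {c d : G} (hcd : ⁅c, d⁆ ∈ K) (g : G) : g * ⁅c, d⁆ * g⁻¹ ∈ K :=
    conj_mem_of_commutator_top_le hK (commutator_mem_commutator (mem_top c) (mem_top d)) hcd g
  induction ha using closure_induction with
  | mem x hx => exact hS x hx
  | one => simpa only [commutatorElement_one_left] using K.one_mem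
  | mul a c _ _ ha hc =>
    rw [commutatorElement_mul_left_eq_conj_mul]
    exact mul_mem (conj_mem hc a) ha
  | inv a _ ha =>
    have hba : ⁅b, a⁆ ∈ K := commutatorElement_inv a b ▸ inv_mem ha
    simpa only [commutatorElement_inv_left, inv_inv] using conj_mem hba a⁻¹

theorem commutator_le_of_closure_eq_top {K : Subgroup G} (hK : ⁅_root_.commutator G, ⊤⁆ ≤ K)
    {S : Set G} (hS : closure S = ⊤) (hSK : ∀ x ∈ S, ∀ y ∈ S, ⁅x, y⁆ ∈ K) :
    _root_.commutator G ≤ K := by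
  have mem_closure (a : G) : a ∈ closure S := hS ▸ mem_top a
  have right_generator (y : G) (hy : y ∈ S) (a : G) : ⁅a, y⁆ ∈ K :=
    commutatorElement_mem_of_mem_closure_left hK (fun x hx => hSK x hx y hy) (mem_closure a)
  refine commutator_le.2 fun a _ b _ => ?_
  refine commutatorElement_mem_of_mem_closure_left hK (fun y hy => ?_) (mem_closure a)
  rw [← commutatorElement_inv]
  exact inv_mem (right_generator y hy b)

end Subgroup

/-- If a group `G` is generated by a set `S`, then the commutator subgroup `G₂ = [G,G]` is the
join of `G₃ = [G,[G,G]]` with the subgroup generated by the commutators `⁅x,y⁆` of pairs of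
generators; equivalently, `G₂/G₃` is generated by the images of the `⁅x,y⁆`, `x, y ∈ S`. -/
theorem commutator_eq_lcs_sup_closure_commutators_of_generators
    {G : Type*} [Group G] (S : Set G) (hS : Subgroup.closure S = ⊤) :
    (⊤ : Subgroup G).lowerCentralSeries 1 =
      (⊤ : Subgroup G).lowerCentralSeries 2 ⊔
        Subgroup.closure {c : G | ∃ x ∈ S, ∃ y ∈ S, c = ⁅x, y⁆} := by
  refine le_antisymm ?_ (sup_le (Subgroup.lowerCentralSeries_antitone _ one_le_two) ?_)
  · exact Subgroup.commutator_le_of_closure_eq_top le_sup_left hS fun x hx y hy =>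
      Subgroup.mem_sup_right (Subgroup.subset_closure ⟨x, hx, y, hy, rfl⟩)
  · rw [Subgroup.closure_le]
    rintro _ ⟨x, -, y, -, rfl⟩
    exact Subgroup.commutator_mem_commutator (Subgroup.mem_top x) (Subgroup.mem_top y)
end

section
/- Let F be a free group (F = FreeGroup α for some type α) and let a, b, c ∈ F. If a and b do not commute (⁅a,b⁆ ≠ 1) and c commutes with both a and b (c·a = a·c and c·b = b·c), then c = 1. -/
/-!
Commuting elements `x, y` of a free group generate a subgroup that is free (Nielsen–Schreier)
and abelian; a free group with two distinct basis elements is not abelian (send them to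
non-commuting transpositions), so this subgroup is cyclic and `x, y` are powers of one element.
Hence `a = g ^ k`, `c = g ^ m`, `b = h ^ l`, `c = h ^ n` with `m ≠ 0` since `c ≠ 1`.
Finally `g ^ m = h ^ n` with `m ≠ 0` forces `g` and `h` to commute: the abelianization of the
free group `closure {g, h}`, tensored with `ℚ`, is spanned by the image of `h`, while distinct
basis elements have linearly independent images, so this group is cyclic as well.
-/

open Subgroup

open scoped commutatorElement

theorem FreeGroup.isCyclic_of_subsingleton {β : Type*} [Subsingleton β] :
    IsCyclic (FreeGroup β) := by
  rcases isEmpty_or_nonempty β with hβ | hβ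
  · infer_instance
  · let u := hβ.some
    have hrange : Set.range (of : β → FreeGroup β) = {of u} :=
      Set.range_eq_singleton fun v => congrArg of (Subsingleton.elim v u)
    refine ⟨of u, fun x => ?_⟩
    change x ∈ zpowers (of u)
    rw [zpowers_eq_closure, ← hrange, closure_range_of]
    exact mem_top x

theorem Finsupp.eq_of_single_one_mem_span_singleton {ι K : Type*} [Field K] {w : ι →₀ K}
    {u v : ι} (hu : single u 1 ∈ K ∙ w) (hv : single v 1 ∈ K ∙ w) : u = v := by
  by_contra huv
  obtain ⟨q, hq⟩ := Submodule.mem_span_singleton.1 hu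
  obtain ⟨r, hr⟩ := Submodule.mem_span_singleton.1 hv
  have hqu : q * w u = 1 := by simpa using DFunLike.congr_fun hq u
  have hqv : q * w v = 0 := by simpa [Ne.symm huv] using DFunLike.congr_fun hq v
  have hrv : r * w v = 1 := by simpa using DFunLike.congr_fun hr v
  have hwv : w v = 0 := (mul_eq_zero.1 hqv).resolve_left (left_ne_zero_of_mul_eq_one hqu)
  simp [hwv] at hrv

namespace IsFreeGroup

variable {G : Type*} [Group G] [IsFreeGroup G]

theorem isCyclic_of_subsingleton_generators [Subsingleton (Generators G)] : IsCyclic G :=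
  have := FreeGroup.isCyclic_of_subsingleton (β := Generators G)
  isCyclic_of_surjective (toFreeGroup G).symm (toFreeGroup G).symm.surjective

theorem eq_of_commute_of {u v : Generators G} (h : Commute (of u) (of v)) : u = v := by
  classical
  by_contra huv
  let σ : Generators G → Equiv.Perm (Fin 3) :=
    fun w => if w = u then Equiv.swap 0 1 else if w = v then Equiv.swap 1 2 else 1
  have hσ : Commute (σ u) (σ v) := by simpa only [lift_of] using h.map (lift σ)
  simp only [σ, if_pos rfl, if_neg (Ne.symm huv), if_true] at hσ
  exact absurd hσ.eq (by decide)

theorem isCyclic_of_isMulCommutative [IsMulCommutative G] : IsCyclic G :=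
  have : Subsingleton (Generators G) := ⟨fun _ _ => eq_of_commute_of (mul_comm' _ _)⟩
  isCyclic_of_subsingleton_generators

theorem exists_zpow_eq_of_commute {x y : G} (h : Commute x y) :
    ∃ (g : G) (m n : ℤ), g ^ m = x ∧ g ^ n = y := by
  have : IsMulCommutative (closure {x, y}) := isMulCommutative_closure <| by
    simp only [Set.mem_insert_iff, Set.mem_singleton_iff]
    rintro _ (rfl | rfl) _ (rfl | rfl) <;> first | rfl | exact h.eq | exact h.symm.eq
  have := isCyclic_of_isMulCommutative (G := closure {x, y})
  obtain ⟨g, hg⟩ := IsCyclic.exists_generator (α := closure {x, y})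
  obtain ⟨m, hm⟩ := mem_zpowers_iff.1 (hg ⟨x, subset_closure (by simp)⟩)
  obtain ⟨n, hn⟩ := mem_zpowers_iff.1 (hg ⟨y, subset_closure (by simp)⟩)
  exact ⟨g, m, n, congrArg Subtype.val hm, congrArg Subtype.val hn⟩

noncomputable def toRatFinsupp : G →* Multiplicative (Generators G →₀ ℚ) :=
  lift fun u => .ofAdd (Finsupp.single u 1)

theorem subsingleton_generators_of_toRatFinsupp_mem_span {w : Generators G →₀ ℚ}
    (h : ∀ z : G, (toRatFinsupp z).toAdd ∈ ℚ ∙ w) : Subsingleton (Generators G) :=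
  ⟨fun u v => Finsupp.eq_of_single_one_mem_span_singleton
    (by simpa [toRatFinsupp] using h (of u)) (by simpa [toRatFinsupp] using h (of v))⟩

theorem toRatFinsupp_mem_span_of_zpow_eq {x y : G} {m n : ℤ} (hm : m ≠ 0) (h : x ^ m = y ^ n) :
    (toRatFinsupp x).toAdd ∈ ℚ ∙ (toRatFinsupp y).toAdd := by
  have hmn : (m : ℚ) • (toRatFinsupp x).toAdd = (n : ℚ) • (toRatFinsupp y).toAdd := by
    simpa only [map_zpow, toAdd_zpow, Int.cast_smul_eq_zsmul] using
      congrArg (·.toAdd) (congrArg toRatFinsupp h)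
  refine Submodule.mem_span_singleton.2 ⟨(m : ℚ)⁻¹ * n, ?_⟩
  rw [mul_smul, ← hmn, inv_smul_smul₀ (Int.cast_ne_zero.2 hm)]

theorem isCyclic_of_closure_pair_eq_top_of_zpow_eq {x y : G} (hxy : closure {x, y} = ⊤)
    {m n : ℤ} (hm : m ≠ 0) (h : x ^ m = y ^ n) : IsCyclic G := by
  let line : Subgroup G :=
    (AddSubgroup.toSubgroup (ℚ ∙ (toRatFinsupp y).toAdd).toAddSubgroup).comap toRatFinsupp
  have hline : closure {x, y} ≤ line := by
    rw [closure_le, Set.pair_subset_iff]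
    exact ⟨toRatFinsupp_mem_span_of_zpow_eq hm h, Submodule.mem_span_singleton_self _⟩
  have := subsingleton_generators_of_toRatFinsupp_mem_span fun z => hline (hxy ▸ mem_top z)
  exact isCyclic_of_subsingleton_generators

theorem commute_of_zpow_eq {x y : G} {m n : ℤ} (hm : m ≠ 0) (h : x ^ m = y ^ n) :
    Commute x y := by
  let x' : closure {x, y} := ⟨x, subset_closure (by simp)⟩
  let y' : closure {x, y} := ⟨y, subset_closure (by simp)⟩
  have hgen : closure {x', y'} = ⊤ := by
    rw [← closure_preimage_eq_top]
    congr 1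
    ext z
    simp [x', y', Subtype.ext_iff]
  have := isCyclic_of_closure_pair_eq_top_of_zpow_eq hgen hm (Subtype.ext h)
  exact congrArg Subtype.val (mul_comm' x' y')

end IsFreeGroup

/-- In a free group, an element commuting with two non-commuting elements is trivial. -/
theorem freeGroup_eq_one_of_commutes_with_noncommuting
    {α : Type*} (a b c : FreeGroup α)
    (hab : ⁅a, b⁆ ≠ 1) (hca : c * a = a * c) (hcb : c * b = b * c) :
    c = 1 := by
  by_contra hc
  obtain ⟨g, k, m, rfl, hgc⟩ := IsFreeGroup.exists_zpow_eq_of_commute (Commute.symm hca)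
  obtain ⟨h, l, n, rfl, hhc⟩ := IsFreeGroup.exists_zpow_eq_of_commute (Commute.symm hcb)
  have hm : m ≠ 0 := by rintro rfl; exact hc (by rw [← hgc, zpow_zero])
  have hgh : Commute g h := IsFreeGroup.commute_of_zpow_eq hm (hgc.trans hhc.symm)
  exact hab (commutatorElement_eq_one_iff_commute.2 (hgh.zpow_zpow k l))
end

section
/- Let F = FreeGroup α be a free group on a type α, let k ∈ α, let j₁, …, j_q ∈ α be pairwise distinct elements, and let t₁, …, t_q ∈ ℤ. If the commutator ⁅FreeGroup.of k, (FreeGroup.of j₁)^{t₁} · (FreeGroup.of j₂)^{t₂} ⋯ (FreeGroup.of j_q)^{t_q}⁆ lies in F₃ = [F,[F,F]], then t_i = 0 for every i with j_i ≠ k. -/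
/-!
Map `FreeGroup α` to the integral Heisenberg group, sending `of k` to `x = (1,0,0)`, `of (j i)` to
`y = (0,1,0)` and every other generator to `1`. The image of `w = ∏ (of j_m)^{t_m}` has second
coordinate `t i` (the `j_m` are distinct), so `⁅of k, w⁆` maps to the central element `(0,0,t i)`.
The Heisenberg group has nilpotency class two, so the image of `F₃` is trivial and `t i = 0`.
-/

open scoped commutatorElement

/-- `⟨a, b, c⟩` stands for the upper unitriangular matrix `[[1, a, c], [0, 1, b], [0, 0, 1]]`. -/
@[ext]
structure Heisenberg (R : Type*) where
  a : R
  b : R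
  c : R

namespace Heisenberg

variable {R : Type*} [CommRing R]

instance : Mul (Heisenberg R) := ⟨fun x y => ⟨x.a + y.a, x.b + y.b, x.c + y.c + x.a * y.b⟩⟩
instance : One (Heisenberg R) := ⟨⟨0, 0, 0⟩⟩
instance : Inv (Heisenberg R) := ⟨fun x => ⟨-x.a, -x.b, x.a * x.b - x.c⟩⟩

@[simp] lemma mul_def (x y : Heisenberg R) :
    x * y = ⟨x.a + y.a, x.b + y.b, x.c + y.c + x.a * y.b⟩ := rfl
@[simp] lemma inv_def (x : Heisenberg R) : x⁻¹ = ⟨-x.a, -x.b, x.a * x.b - x.c⟩ := rfl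
@[simp] lemma one_def : (1 : Heisenberg R) = ⟨0, 0, 0⟩ := rfl

instance : Group (Heisenberg R) where
  mul_assoc x y z := by ext <;> simp <;> ring
  one_mul x := by ext <;> simp
  mul_one x := by ext <;> simp
  inv_mul_cancel x := by ext <;> simp [mul_comm]

def bHom : Heisenberg R →* Multiplicative R where
  toFun x := .ofAdd x.b
  map_one' := rfl
  map_mul' _ _ := rfl

def abHom : Heisenberg R →* Multiplicative (R × R) where
  toFun x := .ofAdd (x.a, x.b)
  map_one' := rfl
  map_mul' _ _ := rfl

lemma commutatorElement_eq (g h : Heisenberg R) : ⁅g, h⁆ = ⟨0, 0, g.a * h.b - g.b * h.a⟩ := by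
  rw [commutatorElement_def]
  ext <;> simp
  ring

lemma ker_abHom_le_center : (abHom (R := R)).ker ≤ Subgroup.center _ := by
  intro z hz
  obtain ⟨ha, hb⟩ : z.a = 0 ∧ z.b = 0 := by simpa [abHom] using hz
  refine Subgroup.mem_center_iff.mpr fun g => ?_
  ext <;> simp [ha, hb, add_comm]

lemma lowerCentralSeries_two_eq_bot :
    (⊤ : Subgroup (Heisenberg R)).lowerCentralSeries 2 = ⊥ :=
  Subgroup.lowerCentralSeries_succ_eq_bot _ <|
    (Abelianization.commutator_subset_ker _).trans ker_abHom_le_center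

lemma b_map_prod_ofFn_zpow {G : Type*} [Group G] (φ : G →* Heisenberg R) {q : ℕ}
    (g : Fin q → G) (t : Fin q → ℤ) :
    (φ (List.ofFn fun m => g m ^ t m).prod).b = ∑ m, t m • (φ (g m)).b := by
  calc (φ (List.ofFn fun m => g m ^ t m).prod).b
      = (bHom.comp φ (List.ofFn fun m => g m ^ t m).prod).toAdd := rfl
    _ = (∏ m, bHom.comp φ (g m) ^ t m).toAdd := by
      rw [map_list_prod, List.map_ofFn, List.prod_ofFn]
      simp only [Function.comp_def, map_zpow]
    _ = ∑ m, t m • (φ (g m)).b := by simp only [toAdd_prod, toAdd_zpow]; rfl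

end Heisenberg

theorem Subgroup.map_mem_lowerCentralSeries {G K : Type*} [Group G] [Group K] (f : G →* K)
    {n : ℕ} {g : G} (hg : g ∈ (⊤ : Subgroup G).lowerCentralSeries n) :
    f g ∈ (⊤ : Subgroup K).lowerCentralSeries n := by
  have hmap : f g ∈ ((⊤ : Subgroup G).map f).lowerCentralSeries n := by
    rw [← map_lowerCentralSeries]
    exact mem_map_of_mem f hg
  exact lowerCentralSeries_mono n le_top hmap

/-- In a free group `F = FreeGroup α`, if `k ∈ α`, `j₁, …, j_q ∈ α` are pairwise distinct,
and `⁅of k, (of j₁)^{t₁} ⋯ (of j_q)^{t_q}⁆ ∈ F₃ = [F,[F,F]]`, then `t_i = 0` for every `i`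
with `j_i ≠ k`. -/
theorem exponents_eq_zero_of_commutator_mem_lcs_two
    {α : Type*} (k : α) (q : ℕ) (j : Fin q → α) (hj : Function.Injective j)
    (t : Fin q → ℤ)
    (h : ⁅FreeGroup.of k,
        (List.ofFn fun i : Fin q => (FreeGroup.of (j i)) ^ (t i)).prod⁆ ∈
      Subgroup.lowerCentralSeries (⊤ : Subgroup (FreeGroup α)) 2) :
    ∀ i : Fin q, j i ≠ k → t i = 0 := by
  intro i hik
  classical
  let φ : FreeGroup α →* Heisenberg ℤ :=
    FreeGroup.lift fun a => ⟨if a = k then 1 else 0, if a = j i then 1 else 0, 0⟩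
  have hφk : φ (FreeGroup.of k) = ⟨1, 0, 0⟩ := by simp [φ, hik.symm]
  have hb : (φ (List.ofFn fun m => FreeGroup.of (j m) ^ t m).prod).b = t i := by
    simp [Heisenberg.b_map_prod_ofFn_zpow, φ, hj.eq_iff]
  have hc := Subgroup.map_mem_lowerCentralSeries φ h
  rw [Heisenberg.lowerCentralSeries_two_eq_bot, Subgroup.mem_bot, map_commutatorElement, hφk,
    Heisenberg.commutatorElement_eq] at hc
  simpa [hb] using congrArg Heisenberg.c hc
end
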